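/- Let A_1, …, A_n be positive semidefinite real symmetric matrices with A_1 + ⋯ + A_n ⪯ n·I. Then −n(n-1)·I ⪯ Σ_{i≠j} A_i A_j. -/

import Mathlib

/-!
Writing `S = ∑ aᵢ`, the off-diagonal sum is `S² - ∑ aᵢ²`. From `0 ≤ aᵢ ≤ S ≤ c` we get
`aᵢ² = √aᵢ aᵢ √aᵢ ≤ √aᵢ c √aᵢ = c aᵢ`, so the sum is at least `S² - c S = (S - c/2)² - c²/4 ≥ -c²/4`.
With `c = n ≥ 2` this beats `-n(n-1)`; for `n ≤ 1` there are no off-diagonal pairs.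
-/

open Finset
open scoped MatrixOrder

theorem Finset.sum_filter_ne_mul_eq {ι R : Type*} [Fintype ι] [DecidableEq ι]
    [NonUnitalNonAssocRing R] (a : ι → R) :
    ∑ p ∈ univ.filter (fun p : ι × ι => p.1 ≠ p.2), a p.1 * a p.2 =
      (∑ i, a i) * (∑ i, a i) - ∑ i, a i * a i := by
  rw [eq_sub_iff_add_eq, sum_mul_sum, ← Fintype.sum_prod_type',
    ← sum_filter_add_sum_filter_not univ (fun p : ι × ι => p.1 ≠ p.2)]
  congr 1
  simp only [not_not, sum_filter, Fintype.sum_prod_type]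
  simp

section CFC

variable {A : Type*} [PartialOrder A] [Ring A] [StarRing A] [TopologicalSpace A]
  [StarOrderedRing A] [Algebra ℝ A] [ContinuousFunctionalCalculus ℝ A IsSelfAdjoint]
  [NonnegSpectrumClass ℝ A] [IsSemitopologicalRing A] [T2Space A]

theorem mul_self_le_smul_of_le_smul_one {a : A} (ha : 0 ≤ a) {c : ℝ} (hac : a ≤ c • 1) :
    a * a ≤ c • a := by
  set s := CFC.sqrt a
  have hs : s * s = a := CFC.sqrt_mul_sqrt_self a ha
  calc a * a = s * a * s := by rw [← hs]; noncomm_ring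
    _ ≤ s * (c • 1) * s := conjugate_le_conjugate_of_nonneg hac (CFC.sqrt_nonneg a)
    _ = c • a := by rw [mul_smul_one, smul_mul_assoc, hs]

theorem neg_sq_div_four_smul_one_le_sum_filter_ne_mul [StarModule ℝ A] {ι : Type*} [Fintype ι]
    [DecidableEq ι] {a : ι → A} (ha : ∀ i, 0 ≤ a i) {c : ℝ} (hsum : ∑ i, a i ≤ c • 1) :
    -(c ^ 2 / 4) • (1 : A) ≤ ∑ p ∈ univ.filter (fun p : ι × ι => p.1 ≠ p.2), a p.1 * a p.2 := by
  set S := ∑ i, a i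
  have hS : IsSelfAdjoint (S - (c / 2) • 1) :=
    (IsSelfAdjoint.of_nonneg (sum_nonneg fun i _ => ha i)).sub (.smul (.all _) (.one A))
  have hsq : ∑ i, a i * a i ≤ c • S := by
    rw [smul_sum]
    exact sum_le_sum fun i _ => mul_self_le_smul_of_le_smul_one (ha i)
      ((single_le_sum (fun j _ => ha j) (mem_univ i)).trans hsum)
  calc -(c ^ 2 / 4) • (1 : A) ≤ (S - (c / 2) • 1) * (S - (c / 2) • 1) - (c ^ 2 / 4) • 1 := by
        simpa using hS.mul_self_nonneg
    _ = S * S - c • S := by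
        simp only [sub_mul, mul_sub, smul_mul_assoc, mul_smul_comm, one_mul, mul_one]
        module
    _ ≤ S * S - ∑ i, a i * a i := sub_le_sub_left hsq _
    _ = _ := (sum_filter_ne_mul_eq a).symm

end CFC

theorem stmt6 {d n : ℕ} (A : Fin n → Matrix (Fin d) (Fin d) ℝ)
    (hA : ∀ i, (A i).PosSemidef)
    (hsum : ((n : ℝ) • (1 : Matrix (Fin d) (Fin d) ℝ) - ∑ i, A i).PosSemidef) :
    ((∑ p ∈ Finset.univ.filter (fun p : Fin n × Fin n => p.1 ≠ p.2), A p.1 * A p.2) -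
      (-((n : ℝ) * ((n : ℝ) - 1))) • (1 : Matrix (Fin d) (Fin d) ℝ)).PosSemidef := by
  rcases le_or_gt n 1 with hn | hn
  · have : Subsingleton (Fin n) := Fin.subsingleton_iff_le_one.2 hn
    have hempty : univ.filter (fun p : Fin n × Fin n => p.1 ≠ p.2) = ∅ :=
      filter_false_of_mem fun p _ => not_not.2 (Subsingleton.elim _ _)
    have hscalar : (n : ℝ) * ((n : ℝ) - 1) = 0 := by interval_cases n <;> norm_num
    simpa [hempty, hscalar] using Matrix.PosSemidef.zero
  have hbound := neg_sq_div_four_smul_one_le_sum_filter_ne_mul (fun i => (hA i).nonneg)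
    (Matrix.le_iff.2 hsum)
  have hn' : (2 : ℝ) ≤ n := by exact_mod_cast hn
  have hscalar : (-((n : ℝ) * ((n : ℝ) - 1))) • (1 : Matrix (Fin d) (Fin d) ℝ) ≤
      -((n : ℝ) ^ 2 / 4) • 1 := by
    rw [Matrix.le_iff, ← sub_smul]
    exact Matrix.PosSemidef.one.smul (by nlinarith)
  exact Matrix.le_iff.1 (hscalar.trans hbound)
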